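/- arXiv:2007.14697 — 3 statements merged into one kernel-verified Lean document; each statement's English description precedes it below -/
import Mathlib

section
/- Let H be a real inner product space, σ > 0, and x₁, …, xₙ ∈ H distinct points. Then the Gaussian matrix [exp(-σ‖xᵢ - xⱼ‖²)]ᵢⱼ is positive definite, i.e., for all real scalars c₁,…,cₙ not all zero, ∑ᵢⱼ cᵢcⱼ exp(-σ‖xᵢ-xⱼ‖²) > 0. -/
/-!
Writing `exp (-σ‖a - b‖²)` as a multiple of `∫ exp (-2σ‖a - v‖²) exp (-2σ‖b - v‖²) dv` (completing
the square via the parallelogram law) turns the quadratic form `∑ cᵢ cⱼ exp (-σ‖xᵢ - xⱼ‖²)` into a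
positive multiple of `∫ (∑ cᵢ exp (-2σ‖xᵢ - v‖²))² dv`, computed in the finite-dimensional span of
the points. The integrand is continuous, so the integral vanishes only if the Gaussian translates
are linearly dependent; but `exp (-b‖y - v‖²) = exp (-b‖y‖²) exp ⟪2b • y, v⟫ exp (-b‖v‖²)`, and the
characters `v ↦ exp ⟪y, v⟫` of distinct `y` are linearly independent by Dedekind's lemma.
-/

open Real Function Finset MeasureTheory RealInnerProductSpace

section LinearIndependence

variable {V : Type*} [NormedAddCommGroup V] [InnerProductSpace ℝ V]

noncomputable def expInnerChar (y : V) : Multiplicative V →* ℝ where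
  toFun v := exp ⟪y, v.toAdd⟫
  map_one' := by simp
  map_mul' v w := by simp [inner_add_right, exp_add]

theorem expInnerChar_injective : Injective (expInnerChar (V := V)) := by
  intro y y' h
  have h' := DFunLike.congr_fun h (.ofAdd (y - y'))
  simp only [expInnerChar, MonoidHom.coe_mk, OneHom.coe_mk, toAdd_ofAdd, exp_eq_exp] at h'
  rw [← sub_eq_zero, ← inner_self_eq_zero (𝕜 := ℝ), inner_sub_left, h', sub_self]

theorem linearIndependent_exp_inner {ι : Type*} {y : ι → V} (hy : Injective y) :
    LinearIndependent ℝ (fun i (v : V) => exp ⟪y i, v⟫) :=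
  (linearIndependent_monoidHom (Multiplicative V) ℝ).comp _ (expInnerChar_injective.comp hy)

theorem exp_neg_mul_norm_sub_sq (b : ℝ) (y v : V) :
    exp (-b * ‖y - v‖ ^ 2) = exp (-b * ‖y‖ ^ 2) * exp ⟪(2 * b) • y, v⟫ * exp (-b * ‖v‖ ^ 2) := by
  rw [← exp_add, ← exp_add, norm_sub_sq_real, real_inner_smul_left]
  ring_nf

theorem linearIndependent_exp_neg_mul_norm_sub_sq {ι : Type*} {b : ℝ} (hb : b ≠ 0) {y : ι → V}
    (hy : Injective y) : LinearIndependent ℝ (fun i (v : V) => exp (-b * ‖y i - v‖ ^ 2)) := by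
  set g : V → ℝ := fun v => exp (-b * ‖v‖ ^ 2)
  set u : ι → ℝˣ := fun i => Units.mk0 (exp (-b * ‖y i‖ ^ 2)) (exp_ne_zero _)
  have hchar := linearIndependent_exp_inner
    ((smul_right_injective V (mul_ne_zero two_ne_zero hb)).comp hy)
  have hg : LinearMap.ker (LinearMap.mulRight ℝ g) = ⊥ :=
    LinearMap.ker_eq_bot'.mpr fun φ hφ => funext fun v => by
      simpa [g, exp_ne_zero] using congrFun hφ v
  have hfamily : (fun i (v : V) => exp (-b * ‖y i - v‖ ^ 2)) =
      LinearMap.mulRight ℝ g ∘ (u • fun i (v : V) => exp ⟪(2 * b) • y i, v⟫) := by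
    ext i v
    rw [exp_neg_mul_norm_sub_sq]
    rfl
  rw [hfamily]
  exact (hchar.units_smul u).map' _ hg

end LinearIndependence

theorem sq_sum_mul_eq {ι α : Type*} (s : Finset ι) (c : ι → ℝ) (f : ι → α → ℝ) (a : α) :
    (∑ i ∈ s, c i * f i a) ^ 2 = ∑ i ∈ s, ∑ j ∈ s, c i * c j * (f i a * f j a) := by
  rw [sq, sum_mul_sum]
  exact sum_congr rfl fun i _ => sum_congr rfl fun j _ => by ring

section QuadraticForm

variable {α ι : Type*} [MeasurableSpace α] {μ : Measure α} {s : Finset ι} {f : ι → α → ℝ}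

theorem integrable_sq_sum_mul (c : ι → ℝ)
    (hf : ∀ i ∈ s, ∀ j ∈ s, Integrable (fun a => f i a * f j a) μ) :
    Integrable (fun a => (∑ i ∈ s, c i * f i a) ^ 2) μ := by
  simp only [sq_sum_mul_eq]
  exact integrable_finsetSum _ fun i hi =>
    integrable_finsetSum _ fun j hj => (hf i hi j hj).const_mul _

theorem integral_sq_sum_mul (c : ι → ℝ)
    (hf : ∀ i ∈ s, ∀ j ∈ s, Integrable (fun a => f i a * f j a) μ) :
    ∫ a, (∑ i ∈ s, c i * f i a) ^ 2 ∂μ = ∑ i ∈ s, ∑ j ∈ s, c i * c j * ∫ a, f i a * f j a ∂μ := by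
  simp only [sq_sum_mul_eq]
  rw [integral_finsetSum _ fun i hi =>
    integrable_finsetSum _ fun j hj => (hf i hi j hj).const_mul _]
  refine sum_congr rfl fun i hi => ?_
  rw [integral_finsetSum _ fun j hj => (hf i hi j hj).const_mul _]
  simp only [integral_const_mul]

end QuadraticForm

section GaussianIntegral

variable {V : Type*} [NormedAddCommGroup V] [InnerProductSpace ℝ V]

theorem exp_mul_exp_neg_mul_norm_sub_sq (b : ℝ) (a a' v : V) :
    exp (-(2 * b) * ‖a - v‖ ^ 2) * exp (-(2 * b) * ‖a' - v‖ ^ 2) =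
      exp (-b * ‖a - a'‖ ^ 2) * exp (-(4 * b) * ‖v - midpoint ℝ a a'‖ ^ 2) := by
  have hpar := parallelogram_law_with_norm ℝ (a - v) (a' - v)
  have hsum : a - v + (a' - v) = (-2 : ℝ) • (v - midpoint ℝ a a') := by
    rw [midpoint_eq_smul_add, invOf_eq_inv]
    module
  rw [hsum, sub_sub_sub_cancel_right, norm_smul, norm_neg, Real.norm_two] at hpar
  rw [← exp_add, ← exp_add]
  congr 1
  linear_combination b * hpar

variable [FiniteDimensional ℝ V] [MeasurableSpace V] [BorelSpace V]

theorem integrable_exp_neg_mul_norm_sq {b : ℝ} (hb : 0 < b) :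
    Integrable (fun v : V => exp (-b * ‖v‖ ^ 2)) :=
  .of_integral_ne_zero <| by
    rw [GaussianFourier.integral_rexp_neg_mul_sq_norm hb]
    positivity

theorem integrable_exp_mul_exp_neg_mul_norm_sub_sq {b : ℝ} (hb : 0 < b) (a a' : V) :
    Integrable (fun v => exp (-(2 * b) * ‖a - v‖ ^ 2) * exp (-(2 * b) * ‖a' - v‖ ^ 2)) := by
  simp only [exp_mul_exp_neg_mul_norm_sub_sq]
  exact ((integrable_exp_neg_mul_norm_sq (by positivity)).comp_sub_right _).const_mul _

theorem integral_exp_mul_exp_neg_mul_norm_sub_sq {b : ℝ} (hb : 0 < b) (a a' : V) :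
    ∫ v, exp (-(2 * b) * ‖a - v‖ ^ 2) * exp (-(2 * b) * ‖a' - v‖ ^ 2) =
      (π / (4 * b)) ^ (Module.finrank ℝ V / 2 : ℝ) * exp (-b * ‖a - a'‖ ^ 2) := by
  simp only [exp_mul_exp_neg_mul_norm_sub_sq]
  rw [integral_const_mul, integral_sub_right_eq_self (fun v : V => exp (-(4 * b) * ‖v‖ ^ 2)),
    GaussianFourier.integral_rexp_neg_mul_sq_norm (by positivity), mul_comm]

theorem sum_mul_exp_neg_mul_norm_sub_sq_pos {σ : ℝ} (hσ : 0 < σ) {ι : Type*} [Fintype ι]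
    {x : ι → V} (hx : Injective x) {c : ι → ℝ} (hc : c ≠ 0) :
    0 < ∑ i, ∑ j, c i * c j * exp (-σ * ‖x i - x j‖ ^ 2) := by
  set f : ι → V → ℝ := fun i v => exp (-(2 * σ) * ‖x i - v‖ ^ 2)
  have hf : ∀ i ∈ univ, ∀ j ∈ univ, Integrable (fun v => f i v * f j v) :=
    fun i _ j _ => integrable_exp_mul_exp_neg_mul_norm_sub_sq hσ (x i) (x j)
  have hint : ∫ v, (∑ i, c i * f i v) ^ 2 = (π / (4 * σ)) ^ (Module.finrank ℝ V / 2 : ℝ) *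
      ∑ i, ∑ j, c i * c j * exp (-σ * ‖x i - x j‖ ^ 2) := by
    simp only [integral_sq_sum_mul c hf, f, integral_exp_mul_exp_neg_mul_norm_sub_sq hσ, mul_sum]
    exact sum_congr rfl fun i _ => sum_congr rfl fun j _ => by ring
  obtain ⟨v, hv⟩ : ∃ v, ∑ i, c i * f i v ≠ 0 := by
    by_contra! h
    exact hc (funext (Fintype.linearIndependent_iff.mp
      (linearIndependent_exp_neg_mul_norm_sub_sq (b := 2 * σ) (by positivity) hx) c
      (funext fun v => by simpa [f] using h v)))
  have hpos : 0 < ∫ v, (∑ i, c i * f i v) ^ 2 :=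
    integral_pos_of_integrable_nonneg_nonzero (by fun_prop) (integrable_sq_sum_mul c hf)
      (fun _ => sq_nonneg _) (pow_ne_zero 2 hv)
  rw [hint] at hpos
  exact pos_of_mul_pos_right hpos (by positivity)

end GaussianIntegral

/-- The Gaussian kernel on a real inner product space is strictly positive
definite: its interpolation matrix at distinct points is positive definite. -/
theorem gaussian_strictly_pos_def {H : Type*} [NormedAddCommGroup H]
    [InnerProductSpace ℝ H] (σ : ℝ) (hσ : 0 < σ) (n : ℕ) (x : Fin n → H)
    (hx : Function.Injective x) (c : Fin n → ℝ) (hc : c ≠ 0) :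
    0 < ∑ i, ∑ j, c i * c j * Real.exp (-σ * ‖x i - x j‖ ^ 2) := by
  let W := Submodule.span ℝ (Set.range x)
  have : FiniteDimensional ℝ W := FiniteDimensional.span_of_finite ℝ (Set.finite_range x)
  let : MeasurableSpace W := borel W
  have : BorelSpace W := ⟨rfl⟩
  let y : Fin n → W := fun i => ⟨x i, Submodule.subset_span (Set.mem_range_self i)⟩
  have hy : Injective y := fun i j hij => hx congr(Subtype.val $hij)
  exact sum_mul_exp_neg_mul_norm_sub_sq_pos hσ hy hc
end

section
/- Let X be a subset of a real Hilbert space H with the induced topology, and σ > 0. The function x ↦ exp(-σ‖x-z‖²) on X belongs to C₀(X) for every z ∈ X if and only if every subset of X that is bounded (in the norm of H) and closed in X is compact. -/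
/-!
For `σ > 0`, `exp (-σ t²) → 0` exactly when `t → ∞`, so all Gaussian translates vanish at infinity
iff `‖x - z‖ → ∞` along the cocompact filter of `X`, i.e. iff the inclusion `X → H` maps the
cocompact filter into the cobounded one. For a continuous map into a metric space this says that
the preimage of every bounded set has compact closure, which is the same as closed sets with
bounded image being compact.
-/

open Filter Bornology

theorem tendsto_exp_neg_mul_sq_nhds_zero_iff {α : Type*} {l : Filter α} {σ : ℝ} (hσ : 0 < σ)
    {f : α → ℝ} (hf : ∀ x, 0 ≤ f x) :
    Tendsto (fun x => Real.exp (-σ * f x ^ 2)) l (nhds 0) ↔ Tendsto f l atTop := by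
  rw [Real.tendsto_exp_comp_nhds_zero, tendsto_const_mul_atBot_of_neg (neg_neg_of_pos hσ)]
  refine ⟨fun h => ?_, fun h => (tendsto_pow_atTop two_ne_zero).comp h⟩
  simpa only [Function.comp_def, Real.sqrt_sq (hf _)] using Real.tendsto_sqrt_atTop.comp h

theorem tendsto_cocompact_cobounded_iff {X Y : Type*} [TopologicalSpace X] [PseudoMetricSpace Y]
    {f : X → Y} (hf : Continuous f) :
    Tendsto f (cocompact X) (cobounded Y) ↔
      ∀ s : Set X, IsBounded (f '' s) → IsClosed s → IsCompact s := by
  constructor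
  · intro h s hs hsc
    obtain ⟨K, hK, hsK⟩ := mem_cocompact'.1 (h hs)
    exact hK.of_isClosed_subset hsc fun x hx => hsK fun hx' => hx' ⟨x, hx, rfl⟩
  · intro h t ht
    have hbdd : IsBounded (f '' closure (f ⁻¹' tᶜ)) :=
      (isBounded_compl_iff.2 ht).closure.subset <| (image_closure_subset_closure_image hf).trans <|
        closure_mono (Set.image_preimage_subset _ _)
    exact mem_cocompact'.2 ⟨_, h _ hbdd isClosed_closure, subset_closure⟩

theorem gaussian_c0_iff_heine_borel_general {H : Type*} [NormedAddCommGroup H] (X : Set H)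
    (σ : ℝ) (hσ : 0 < σ) :
    (∀ z ∈ X, Tendsto (fun x : X => Real.exp (-σ * ‖(x : H) - z‖ ^ 2))
        (cocompact X) (nhds 0)) ↔
    (∀ s : Set X, Bornology.IsBounded ((↑) '' s : Set H) → IsClosed s →
        IsCompact s) := by
  simp_rw [← dist_eq_norm, tendsto_exp_neg_mul_sq_nhds_zero_iff hσ fun _ => dist_nonneg,
    Metric.tendsto_dist_right_atTop_iff, ← tendsto_cocompact_cobounded_iff continuous_subtype_val]
  rcases X.eq_empty_or_nonempty with rfl | ⟨z, hz⟩
  · simp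
  · exact ⟨fun h => h z hz, fun h _ _ => h⟩

/-- For `X ⊆ H` locally compact (induced topology) and `σ > 0`, all Gaussian
translates `x ↦ exp(-σ‖x-z‖²)`, `z ∈ X`, vanish at infinity on `X` if and only
if every bounded (in the norm of `H`) and closed subset of `X` is compact. -/
theorem gaussian_c0_iff_heine_borel {H : Type*} [NormedAddCommGroup H]
    [InnerProductSpace ℝ H] [CompleteSpace H] (X : Set H)
    [LocallyCompactSpace X] (σ : ℝ) (hσ : 0 < σ) :
    (∀ z ∈ X, Tendsto (fun x : X => Real.exp (-σ * ‖(x : H) - z‖ ^ 2))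
        (cocompact X) (nhds 0)) ↔
    (∀ s : Set X, Bornology.IsBounded ((↑) '' s : Set H) → IsClosed s →
        IsCompact s) :=
  gaussian_c0_iff_heine_borel_general X σ hσ
end

section
/- Let c₁,…,cₘ be real numbers, ν₁,…,νₘ positive reals, and f₁,…,fₘ reals, with the pairs (νᵢ, fᵢ) pairwise distinct. If ∑ᵢ cᵢ t^{νᵢ} e^{-fᵢ t} = 0 for every t > 0, then all cᵢ = 0. -/
open Filter Real Topology

/-- The functions `t ↦ t^{νᵢ} e^{-fᵢ t}` with pairwise distinct parameter
pairs `(νᵢ, fᵢ)` are linearly independent on `(0,∞)`. -/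
theorem rpow_exp_linear_independent (m : ℕ) (c : Fin m → ℝ) (ν : Fin m → ℝ)
    (f : Fin m → ℝ) (hν : ∀ i, 0 < ν i)
    (hdist : ∀ i j : Fin m, (ν i, f i) = (ν j, f j) → i = j)
    (hzero : ∀ t : ℝ, 0 < t → ∑ i, c i * t ^ (ν i) * Real.exp (-f i * t) = 0) :
    ∀ i, c i = 0 := by
  intro i₀'
  by_contra hc0
  set S : Finset (Fin m) := Finset.univ.filter (fun i => c i ≠ 0) with hS
  have hSne : S.Nonempty := ⟨i₀', by simp [hS, hc0]⟩
  obtain ⟨i₁, hi₁S, hi₁min⟩ := S.exists_min_image f hSne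
  set S' : Finset (Fin m) := S.filter (fun i => f i = f i₁) with hS'
  have hS'ne : S'.Nonempty := ⟨i₁, by simp [hS', hi₁S]⟩
  obtain ⟨i₀, hi₀S', hi₀max⟩ := S'.exists_max_image ν hS'ne
  have hi₀S : i₀ ∈ S := (Finset.mem_filter.mp hi₀S').1
  have hf₀ : f i₀ = f i₁ := (Finset.mem_filter.mp hi₀S').2
  have hc : c i₀ ≠ 0 := by simpa [hS] using hi₀S
  have hterm : ∀ i : Fin m, Tendsto
      (fun t : ℝ => c i * t ^ (ν i - ν i₀) * Real.exp (-(f i - f i₀) * t)) atTop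
      (𝓝 (if i = i₀ then c i₀ else 0)) := by
    intro i
    by_cases hi : i = i₀
    · subst hi
      simp only [sub_self, Real.rpow_zero, neg_zero, zero_mul, Real.exp_zero, mul_one,
        if_pos rfl]
      exact tendsto_const_nhds
    · rw [if_neg hi]
      by_cases hci : c i = 0
      · simpa [hci] using tendsto_const_nhds (x := (0:ℝ)) (f := atTop)
      · have hiS : i ∈ S := by simp [hS, hci]
        have hle : f i₀ ≤ f i := hf₀ ▸ hi₁min i hiS
        rcases lt_or_eq_of_le hle with hlt | heq
        · have h1 : Tendsto (fun t : ℝ => t ^ (ν i - ν i₀) * Real.exp (-(f i - f i₀) * t))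
              atTop (𝓝 0) :=
            tendsto_rpow_mul_exp_neg_mul_atTop_nhds_zero _ _ (by linarith)
          have := h1.const_mul (c i)
          simpa [mul_assoc] using this
        · have hiS' : i ∈ S' := Finset.mem_filter.mpr ⟨hiS, by rw [← heq, hf₀]⟩
          have hle' : ν i ≤ ν i₀ := hi₀max i hiS'
          have hne : ν i ≠ ν i₀ := fun h => hi (hdist i i₀ (by rw [h, ← heq]))
          have hlt' : 0 < ν i₀ - ν i := by
            rcases lt_or_eq_of_le hle' with h | h
            · linarith
            · exact absurd h hne
          have h1 : Tendsto (fun t : ℝ => t ^ (ν i - ν i₀)) atTop (𝓝 0) := by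
            have := tendsto_rpow_neg_atTop hlt'
            simpa [neg_sub] using this
          have h2 : Tendsto (fun t : ℝ => c i * t ^ (ν i - ν i₀) * Real.exp (-(f i - f i₀) * t))
              atTop (𝓝 (c i * 0 * Real.exp (-(f i - f i₀) * 0))) := by
            have : (fun t : ℝ => c i * t ^ (ν i - ν i₀) * Real.exp (-(f i - f i₀) * t))
                = fun t : ℝ => c i * t ^ (ν i - ν i₀) := by
              funext t; rw [← heq]; simp
            rw [this, ← heq]
            simpa using h1.const_mul (c i)
          simpa [← heq] using h2
  have hsum : Tendsto (fun t : ℝ => ∑ i, c i * t ^ (ν i - ν i₀) * Real.exp (-(f i - f i₀) * t))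
      atTop (𝓝 (c i₀)) := by
    have := tendsto_finset_sum Finset.univ (fun i _ => hterm i)
    simpa [Finset.sum_ite_eq' Finset.univ i₀] using this
  have heq0 : ∀ᶠ t : ℝ in atTop,
      (∑ i, c i * t ^ (ν i - ν i₀) * Real.exp (-(f i - f i₀) * t)) = 0 := by
    filter_upwards [eventually_gt_atTop 0] with t ht
    have key : ∀ i : Fin m, c i * t ^ (ν i - ν i₀) * Real.exp (-(f i - f i₀) * t)
        = (c i * t ^ (ν i) * Real.exp (-f i * t)) * (t ^ (-(ν i₀)) * Real.exp (f i₀ * t)) := by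
      intro i
      rw [Real.rpow_sub ht, Real.rpow_neg ht.le, div_eq_mul_inv]
      have : (-(f i - f i₀)) * t = (-f i * t) + f i₀ * t := by ring
      rw [this, Real.exp_add]
      ring
    simp only [key]
    rw [← Finset.sum_mul, hzero t ht, zero_mul]
  have : c i₀ = 0 := tendsto_nhds_unique (hsum.congr' heq0) tendsto_const_nhds
  exact hc this
end
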